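/- In the net setting for distance-regular graphs with d → ∞ and Assumption (DR), suppose that k = 2 eventually along the net. Then the limits γ_i = lim t^i √(k_i) exist for all i ≥ 0; moreover ω_i = ω_1/2 and α_i = α_1 for all i = 2, 3, …. -/

import Mathlib

/-!
A distance-regular graph of valency `2` is a polygon: for `1 ≤ i < d` we have `c_i, b_i ≥ 1`
(walk along a geodesic of length `d`) and `c_i + a_i + b_i = k = 2`, so `c_i = b_i = 1` and
`a_i = 0`. Since `d → ∞`, for each fixed `i` all normalized parameters are eventually explicit:
`ω̄_1 = 2 / Σ_t²`, `ω̄_i = ω̄_1 / 2`, `ᾱ_i = ᾱ_1 = -2t / Σ_t` and `k_i = 2`. Hence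
`Σ_t² → 2 / ω_1 > 0`, so `t = -ᾱ_1 Σ_t / 2` and `γ̄_i = t^i √2` converge.
-/

open Matrix Filter

/-- A (bundled) distance-regular graph: a finite connected simple graph of diameter `d`
with intersection numbers `a i`, `b i`, `c i` for `0 ≤ i ≤ d`; `b 0` is the valency `k`. -/
structure DRG where
  X : Type
  fin : Fintype X
  G : SimpleGraph X
  d : ℕ
  a : ℕ → ℕ
  b : ℕ → ℕ
  c : ℕ → ℕ
  conn : G.Connected
  dist_le : ∀ x y : X, G.dist x y ≤ d
  dist_eq : ∃ x y : X, G.dist x y = d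
  bd : b d = 0
  c0 : c 0 = 0
  count_c : ∀ i ≤ d, ∀ x y : X, G.dist x y = i →
      {z : X | G.Adj y z ∧ G.dist x z = i - 1}.ncard = c i
  count_a : ∀ i ≤ d, ∀ x y : X, G.dist x y = i →
      {z : X | G.Adj y z ∧ G.dist x z = i}.ncard = a i
  count_b : ∀ i ≤ d, ∀ x y : X, G.dist x y = i →
      {z : X | G.Adj y z ∧ G.dist x z = i + 1}.ncard = b i

attribute [instance] DRG.fin

noncomputable instance (Γ : DRG) : DecidableEq Γ.X := Classical.decEq _

noncomputable instance (Γ : DRG) : DecidableRel Γ.G.Adj := fun _ _ => Classical.dec _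

namespace DRG

variable (Γ : DRG)

/-- The `i`-th distance matrix (over `ℂ`). -/
noncomputable def Amat (i : ℕ) : Matrix Γ.X Γ.X ℂ :=
  Matrix.of fun x y => if Γ.G.dist x y = i then 1 else 0

/-- The adjacency algebra `A(Γ) = span_ℂ {A_0, …, A_d}`. -/
noncomputable def adjAlg : Submodule ℂ (Matrix Γ.X Γ.X ℂ) :=
  Submodule.span ℂ {M | ∃ i ≤ Γ.d, M = Γ.Amat i}

/-- The matrix `K_t = (t^{∂(x,y)})_{x,y}` (over `ℝ`). -/
noncomputable def Kmat (t : ℝ) : Matrix Γ.X Γ.X ℝ :=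
  Matrix.of fun x y => t ^ Γ.G.dist x y

/-- `t ∈ π(Γ)`, i.e. `K_t` is positive semidefinite. -/
def piMem (t : ℝ) : Prop := (Γ.Kmat t).PosSemidef

/-- The Gibbs functional `φ_t(B) = ∑_x t^{∂(x,o)} B_{x,o}` with base vertex `o`. -/
noncomputable def gibbs (t : ℝ) (o : Γ.X) (B : Matrix Γ.X Γ.X ℂ) : ℂ :=
  ∑ x : Γ.X, (t : ℂ) ^ Γ.G.dist x o * B x o

end DRG

section Net

variable {Λ : Type*} [Preorder Λ] [IsDirected Λ (· ≤ ·)] [Nonempty Λ]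

/-- The variance `Σ_t²(A) = k(1−t)(1+t+t·a₁)` as a function of the net index. -/
noncomputable def sig2 (Γ : Λ → DRG) (t : Λ → ℝ) (l : Λ) : ℝ :=
  ((Γ l).b 0 : ℝ) * (1 - t l) * (1 + t l + t l * ((Γ l).a 1 : ℝ))

/-- `ω̄_i = c_i b_{i−1} / Σ_t²(A)`. -/
noncomputable def omegaBar (Γ : Λ → DRG) (t : Λ → ℝ) (i : ℕ) (l : Λ) : ℝ :=
  (((Γ l).c i : ℝ) * ((Γ l).b (i - 1) : ℝ)) / sig2 Γ t l

/-- `ᾱ_i = (a_{i−1} − t·k) / Σ_t(A)`. -/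
noncomputable def alphaBar (Γ : Λ → DRG) (t : Λ → ℝ) (i : ℕ) (l : Λ) : ℝ :=
  (((Γ l).a (i - 1) : ℝ) - t l * ((Γ l).b 0 : ℝ)) / Real.sqrt (sig2 Γ t l)

/-- `k_i = (b₀⋯b_{i−1})/(c₁⋯c_i)` as a real number. -/
noncomputable def kiProd (Γ : Λ → DRG) (i : ℕ) (l : Λ) : ℝ :=
  (∏ h ∈ Finset.range i, ((Γ l).b h : ℝ)) / (∏ h ∈ Finset.range i, ((Γ l).c (h + 1) : ℝ))

/-- `γ̄_i = t^i √(k_i)`. -/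
noncomputable def gammaBar (Γ : Λ → DRG) (t : Λ → ℝ) (i : ℕ) (l : Λ) : ℝ :=
  t l ^ i * Real.sqrt (kiProd Γ i l)

/-- Assumption (DR): for every `i ≥ 1` the limits `ω_i = lim ω̄_i` and `α_i = lim ᾱ_i`
exist (with prescribed values `ω i`, `αl i`) and `ω_i > 0`. -/
def AssumptionDR (Γ : Λ → DRG) (t : Λ → ℝ) (ω αl : ℕ → ℝ) : Prop :=
  ∀ i : ℕ, 1 ≤ i → 0 < ω i ∧ Tendsto (omegaBar Γ t i) atTop (nhds (ω i)) ∧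
    Tendsto (alphaBar Γ t i) atTop (nhds (αl i))

end Net

open Topology

lemma SimpleGraph.Walk.dist_getVert_of_length_eq_dist {V : Type*} {G : SimpleGraph V}
    {u v : V} (p : G.Walk u v) (hp : p.length = G.dist u v) {i : ℕ} (hi : i ≤ p.length) :
    G.dist u (p.getVert i) = i := by
  rw [← length_eq_dist_of_subwalk hp (p.isSubwalk_take i), take_length]
  exact min_eq_left hi

namespace DRG

variable (Γ : DRG)

lemma exists_geodesic : ∃ (x y : Γ.X) (p : Γ.G.Walk x y), p.length = Γ.d ∧
    ∀ i ≤ Γ.d, Γ.G.dist x (p.getVert i) = i := by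
  obtain ⟨x, y, hxy⟩ := Γ.dist_eq
  obtain ⟨p, hp⟩ := Γ.conn.exists_walk_length_eq_dist x y
  exact ⟨x, y, p, hp.trans hxy, fun i hi =>
    p.dist_getVert_of_length_eq_dist hp (hp.trans hxy ▸ hi)⟩

lemma a_zero : Γ.a 0 = 0 := by
  obtain ⟨x⟩ := Γ.conn.nonempty
  rw [← Γ.count_a 0 (Nat.zero_le _) x x SimpleGraph.dist_self, Set.ncard_eq_zero]
  ext z
  simp only [Set.mem_ofPred_eq, Set.mem_empty_iff_false, iff_false, not_and]
  intro hxz hdist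
  exact hxz.ne (Γ.conn.dist_eq_zero_iff.mp hdist)

lemma ncard_neighborSet (y : Γ.X) : (Γ.G.neighborSet y).ncard = Γ.b 0 := by
  rw [← Γ.count_b 0 (Nat.zero_le _) y y SimpleGraph.dist_self]
  congr 1
  ext z
  simp

variable {Γ}

lemma one_le_c {i : ℕ} (h1 : 1 ≤ i) (h2 : i ≤ Γ.d) : 1 ≤ Γ.c i := by
  obtain ⟨x, _, p, hp, hdist⟩ := Γ.exists_geodesic
  rw [← Γ.count_c i h2 x (p.getVert i) (hdist i h2)]
  obtain ⟨j, rfl⟩ := Nat.exists_eq_add_of_le' h1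
  exact (Set.ncard_pos (Set.toFinite _)).mpr
    ⟨p.getVert j, (p.adj_getVert_succ (by omega)).symm, hdist j (by omega)⟩

lemma one_le_b {i : ℕ} (h : i < Γ.d) : 1 ≤ Γ.b i := by
  obtain ⟨x, _, p, hp, hdist⟩ := Γ.exists_geodesic
  rw [← Γ.count_b i h.le x (p.getVert i) (hdist i h.le)]
  exact (Set.ncard_pos (Set.toFinite _)).mpr
    ⟨p.getVert (i + 1), p.adj_getVert_succ (by omega), hdist (i + 1) h⟩

lemma c_add_a_add_b {i : ℕ} (h1 : 1 ≤ i) (h2 : i ≤ Γ.d) :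
    Γ.c i + Γ.a i + Γ.b i = Γ.b 0 := by
  obtain ⟨x, _, p, -, hdist⟩ := Γ.exists_geodesic
  set y := p.getVert i
  have hxy : Γ.G.dist x y = i := hdist i h2
  let S (j : ℕ) : Set Γ.X := {z | Γ.G.Adj y z ∧ Γ.G.dist x z = j}
  have hunion : Γ.G.neighborSet y = (S (i - 1) ∪ S i) ∪ S (i + 1) := by
    ext z
    simp only [SimpleGraph.mem_neighborSet, Set.mem_union, Set.mem_ofPred_eq, S]
    refine ⟨fun hz => ?_, by rintro ((⟨h, -⟩ | ⟨h, -⟩) | ⟨h, -⟩) <;> exact h⟩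
    rcases hz.diff_dist_adj (u := x) with h | h | h <;> simp only [hz, true_and] <;> omega
  have hdisj (j j' : ℕ) (h : j ≠ j') : Disjoint (S j) (S j') :=
    Set.disjoint_left.mpr fun z hz hz' => h (hz.2.symm.trans hz'.2)
  rw [← Γ.ncard_neighborSet y, hunion, Set.ncard_union_eq,
    Set.ncard_union_eq (hdisj _ _ (by omega)), Γ.count_c i h2 x y hxy, Γ.count_a i h2 x y hxy,
    Γ.count_b i h2 x y hxy]
  exact Set.disjoint_union_left.mpr ⟨hdisj _ _ (by omega), hdisj _ _ (by omega)⟩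

lemma intersection_numbers_of_b_zero_eq_two (hk : Γ.b 0 = 2) {i : ℕ} (h1 : 1 ≤ i)
    (h2 : i < Γ.d) : Γ.c i = 1 ∧ Γ.a i = 0 ∧ Γ.b i = 1 := by
  have := Γ.c_add_a_add_b h1 h2.le
  have := one_le_c h1 h2.le
  have := one_le_b h2
  omega

lemma a_eq_zero_of_b_zero_eq_two (hk : Γ.b 0 = 2) {i : ℕ} (h : i < Γ.d) :
    Γ.a i = 0 := by
  rcases Nat.eq_zero_or_pos i with rfl | hi
  · exact Γ.a_zero
  · exact (Γ.intersection_numbers_of_b_zero_eq_two hk hi h).2.1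

end DRG

section ValencyTwo

variable {Λ : Type*} {Γ : Λ → DRG} {t : Λ → ℝ}

lemma kiProd_zero (l : Λ) : kiProd Γ 0 l = 1 := by
  simp [kiProd]

lemma kiProd_succ_eq_two {l : Λ} (hk : (Γ l).b 0 = 2) {m : ℕ} (hm : m + 1 < (Γ l).d) :
    kiProd Γ (m + 1) l = 2 := by
  have hcab {j : ℕ} (h1 : 1 ≤ j) (h2 : j ≤ m + 1) :=
    (Γ l).intersection_numbers_of_b_zero_eq_two hk h1 (h2.trans_lt hm)
  rw [kiProd, Finset.prod_range_succ', Finset.prod_eq_one, Finset.prod_eq_one]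
  · simp [hk]
  · intro j hj
    simp [(hcab (Nat.le_add_left 1 j) (by simpa using Finset.mem_range.mp hj)).1]
  · intro j hj
    simp [(hcab (Nat.le_add_left 1 j) (by simpa using (Finset.mem_range.mp hj).le)).2.2]

lemma omegaBar_one_eq {l : Λ} (hk : (Γ l).b 0 = 2) (hd : 1 < (Γ l).d) :
    omegaBar Γ t 1 l = 2 / sig2 Γ t l := by
  simp [omegaBar, ((Γ l).intersection_numbers_of_b_zero_eq_two hk le_rfl hd).1, hk]

lemma omegaBar_eq_omegaBar_one_div_two {l : Λ} (hk : (Γ l).b 0 = 2) {i : ℕ} (hi : 2 ≤ i)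
    (hid : i < (Γ l).d) : omegaBar Γ t i l = omegaBar Γ t 1 l / 2 := by
  obtain ⟨hci, -, -⟩ := (Γ l).intersection_numbers_of_b_zero_eq_two hk (by omega) hid
  obtain ⟨-, -, hbi⟩ := (Γ l).intersection_numbers_of_b_zero_eq_two hk (i := i - 1) (by omega)
    (by omega)
  rw [omegaBar_one_eq hk (by omega), omegaBar, hci, hbi]
  ring

lemma alphaBar_eq_alphaBar_one {l : Λ} (hk : (Γ l).b 0 = 2) {i : ℕ} (hid : i < (Γ l).d) :
    alphaBar Γ t i l = alphaBar Γ t 1 l := by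
  simp only [alphaBar, Nat.sub_self, (Γ l).a_zero,
    DRG.a_eq_zero_of_b_zero_eq_two hk (show i - 1 < (Γ l).d by omega)]

lemma eq_alphaBar_one_mul_sqrt_sig2 {l : Λ} (hk : (Γ l).b 0 = 2) (hσ : 0 < sig2 Γ t l) :
    t l = -(alphaBar Γ t 1 l * √(sig2 Γ t l)) / 2 := by
  have : √(sig2 Γ t l) ≠ 0 := (Real.sqrt_pos.mpr hσ).ne'
  simp only [alphaBar, Nat.sub_self, (Γ l).a_zero, hk]
  field_simp
  push_cast
  ring

variable {L : Filter Λ}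

lemma tendsto_sig2 (hev : ∀ᶠ l in L, (Γ l).b 0 = 2 ∧ 1 < (Γ l).d) {ω₁ : ℝ}
    (hω : Tendsto (omegaBar Γ t 1) L (𝓝 ω₁)) (hω₁ : ω₁ ≠ 0) :
    Tendsto (sig2 Γ t) L (𝓝 (2 / ω₁)) := by
  refine (tendsto_const_nhds.div hω hω₁).congr' ?_
  filter_upwards [hev] with l hl
  rw [Pi.div_apply, omegaBar_one_eq hl.1 hl.2, div_div_cancel₀ two_ne_zero]

lemma tendsto_t_of_tendsto_alphaBar_one (hk : ∀ᶠ l in L, (Γ l).b 0 = 2) {σ α₁ : ℝ}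
    (hσ : Tendsto (sig2 Γ t) L (𝓝 σ)) (hσpos : 0 < σ)
    (hα : Tendsto (alphaBar Γ t 1) L (𝓝 α₁)) :
    Tendsto t L (𝓝 (-(α₁ * √σ) / 2)) := by
  refine ((hα.mul hσ.sqrt).neg.div_const 2).congr' ?_
  filter_upwards [hk, hσ.eventually (lt_mem_nhds hσpos)] with l hkl hσl
  exact (eq_alphaBar_one_mul_sqrt_sig2 hkl hσl).symm

lemma tendsto_gammaBar {τ κ : ℝ} (ht : Tendsto t L (𝓝 τ)) {i : ℕ}
    (hκ : ∀ᶠ l in L, kiProd Γ i l = κ) :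
    Tendsto (gammaBar Γ t i) L (𝓝 (τ ^ i * √κ)) := by
  refine ((ht.pow i).mul_const _).congr' ?_
  filter_upwards [hκ] with l hl
  rw [gammaBar, hl]

end ValencyTwo

theorem stmt9_general {Λ : Type*} [Preorder Λ] [IsDirected Λ (· ≤ ·)] [Nonempty Λ]
    (Γ : Λ → DRG) (t : Λ → ℝ)
    (hd : Tendsto (fun l : Λ => (Γ l).d) atTop atTop)
    (ω αl : ℕ → ℝ) (hDR : AssumptionDR Γ t ω αl)
    (hk2 : ∀ᶠ l in (atTop : Filter Λ), (Γ l).b 0 = 2) :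
    (∀ i : ℕ, ∃ γ : ℝ, Tendsto (gammaBar Γ t i) atTop (nhds γ)) ∧
    (∀ i : ℕ, 2 ≤ i → ω i = ω 1 / 2 ∧ αl i = αl 1) := by
  have hev (n : ℕ) : ∀ᶠ l in atTop, (Γ l).b 0 = 2 ∧ n < (Γ l).d :=
    hk2.and (hd.eventually_gt_atTop n)
  obtain ⟨hω₁, hω₁lim, hα₁lim⟩ := hDR 1 le_rfl
  have hσ := tendsto_sig2 (hev 1) hω₁lim hω₁.ne'
  have ht := tendsto_t_of_tendsto_alphaBar_one hk2 hσ (div_pos two_pos hω₁) hα₁lim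
  refine ⟨fun i => ?_, fun i hi => ?_⟩
  · obtain ⟨κ, hκ⟩ : ∃ κ, ∀ᶠ l in atTop, kiProd Γ i l = κ := by
      cases i with
      | zero => exact ⟨1, .of_forall kiProd_zero⟩
      | succ m => exact ⟨2, (hev (m + 1)).mono fun l hl => kiProd_succ_eq_two hl.1 hl.2⟩
    exact ⟨_, tendsto_gammaBar ht hκ⟩
  · obtain ⟨-, hωi, hαi⟩ := hDR i (by omega)
    constructor
    · refine tendsto_nhds_unique hωi ((hω₁lim.div_const 2).congr' ?_)
      filter_upwards [hev i] with l hl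
      exact (omegaBar_eq_omegaBar_one_div_two hl.1 hi hl.2).symm
    · refine tendsto_nhds_unique hαi (hα₁lim.congr' ?_)
      filter_upwards [hev i] with l hl
      exact (alphaBar_eq_alphaBar_one hl.1 hl.2).symm

/-- Under Assumption (DR), if `k = 2` eventually, then the limits `γ_i` exist,
and moreover `ω_i = ω₁/2` and `α_i = α₁` for all `i ≥ 2`. -/
theorem stmt9 {Λ : Type*} [Preorder Λ] [IsDirected Λ (· ≤ ·)] [Nonempty Λ] [Infinite Λ]
    (Γ : Λ → DRG) (t : Λ → ℝ)
    (hpi : ∀ l : Λ, (Γ l).piMem (t l))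
    (hvar : ∀ l : Λ, 0 < sig2 Γ t l)
    (hd : Tendsto (fun l : Λ => (Γ l).d) atTop atTop)
    (ω αl : ℕ → ℝ) (hDR : AssumptionDR Γ t ω αl)
    (hk2 : ∀ᶠ l in (atTop : Filter Λ), (Γ l).b 0 = 2) :
    (∀ i : ℕ, ∃ γ : ℝ, Tendsto (gammaBar Γ t i) atTop (nhds γ)) ∧
    (∀ i : ℕ, 2 ≤ i → ω i = ω 1 / 2 ∧ αl i = αl 1) :=
  stmt9_general Γ t hd ω αl hDR hk2
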